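/- arXiv:2207.00420 — 2 statements merged into one kernel-verified Lean document; each statement's English description precedes it below -/
import Mathlib

section
/- For any α>0 and any r∈(0,1), the polylogarithm Li_{−α}(r) := Σ_{k≥1} k^α r^k satisfies Li_{−α}(r) ≤ 2·(α/(e·log(1/r)))^α + Γ(α+1)/(log(1/r))^{α+1}, where Γ is the Gamma function. -/
/-!
With `L = log (1 / r)` the summand is `f k` for `f x = x ^ α * exp (-(L * x))`, which
increases on `[0, α / L]`, decreases afterwards and peaks at `(α / (e * L)) ^ α`. For such a
unimodal nonnegative function, the sum over each monotone branch is dominated by the integral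
over that branch, except for the two terms at `⌊α / L⌋` and `⌊α / L⌋ + 1`, each at most the peak
value; and `∫₀^∞ f = Γ(α + 1) / L ^ (α + 1)`.
-/

open MeasureTheory Filter Real Set
open scoped ENNReal NNReal Classical

noncomputable section

/-- Shift operator on Borel measures: `(shiftMeasure a μ) B = μ (B - a)`. -/
def shiftMeasure (a : ℝ) (μ : Measure ℝ) : Measure ℝ := μ.map (· + a)

/-- Kullback–Leibler divergence between Borel measures on `ℝ`. -/
def KLdiv (μ ν : Measure ℝ) : ℝ≥0∞ :=
  if μ ≪ ν ∧ Integrable (llr μ ν) μ then ENNReal.ofReal (∫ x, llr μ ν x ∂μ) else ⊤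

/-- Standing assumptions on the cost function. -/
structure IsCostFun (c : ℝ → ℝ) (α β : ℝ) : Prop where
  nonneg : ∀ x, 0 ≤ c x
  zero : c 0 = 0
  even : ∀ x, c (-x) = c x
  mono : ∀ x y : ℝ, |x| ≤ |y| → c x ≤ c y
  continuous : Continuous c
  tail : Tendsto (fun x : ℝ => c x / (β * x ^ α)) atTop (nhds 1)

section Unimodal

variable {f : ℝ → ℝ}

lemma intervalIntegral_add_intervalIntegral_le_integral_Ioi {a b c d : ℝ} (hab : a ≤ b)
    (hbc : b ≤ c) (hcd : c ≤ d) (hf : ∀ x ∈ Ioi a, 0 ≤ f x) (hint : IntegrableOn f (Ioi a)) :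
    (∫ x in a..b, f x) + ∫ x in c..d, f x ≤ ∫ x in Ioi a, f x := by
  have hsub₁ : Ioc a b ⊆ Ioi a := Ioc_subset_Ioi_self
  have hsub₂ : Ioc c d ⊆ Ioi a := fun x hx => lt_of_le_of_lt hab (hbc.trans_lt hx.1)
  rw [intervalIntegral.integral_of_le hab, intervalIntegral.integral_of_le hcd,
    ← setIntegral_union (Ioc_disjoint_Ioc_of_le hbc) measurableSet_Ioc
      (hint.mono_set hsub₁) (hint.mono_set hsub₂)]
  refine setIntegral_mono_set hint ?_ (union_subset hsub₁ hsub₂).eventuallyLE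
  exact (ae_restrict_iff' measurableSet_Ioi).2 (ae_of_all _ hf)

variable {c : ℝ}

lemma apply_le_of_monotoneOn_Icc_of_antitoneOn_Ici (hmono : MonotoneOn f (Icc 0 c))
    (hanti : AntitoneOn f (Ici c)) {x : ℝ} (hx : 0 ≤ x) : f x ≤ f c := by
  rcases le_total x c with hxc | hcx
  · exact hmono ⟨hx, hxc⟩ ⟨hx.trans hxc, le_rfl⟩ hxc
  · exact hanti self_mem_Ici hcx hcx

theorem sum_range_le_two_mul_add_integral_of_unimodal (hc : 0 ≤ c)
    (hmono : MonotoneOn f (Icc 0 c)) (hanti : AntitoneOn f (Ici c))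
    (hf : ∀ x, 0 ≤ x → 0 ≤ f x) (hint : IntegrableOn f (Ioi 0)) (n : ℕ) :
    ∑ k ∈ Finset.range n, f k ≤ 2 * f c + ∫ x in Ioi 0, f x := by
  set m := ⌊c⌋₊
  have hmc : (m : ℝ) ≤ c := Nat.floor_le hc
  have hcm : c ≤ m + 1 := (Nat.lt_floor_add_one c).le
  have hrise : ∑ k ∈ Finset.range m, f k ≤ ∫ x in (0 : ℝ)..m, f x := by
    simpa using MonotoneOn.sum_le_integral (x₀ := 0) (a := m)
      (hmono.mono (Icc_subset_Icc_right (by simpa using hmc)))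
  have hfall : ∑ i ∈ Finset.range n, f ((m + 1 : ℝ) + ↑(i + 1)) ≤
      ∫ x in (m + 1 : ℝ)..m + 1 + n, f x :=
    AntitoneOn.sum_le_integral (hanti.mono fun x hx => hcm.trans hx.1)
  have hpeak : f m + f (m + 1 : ℕ) ≤ 2 * f c := by
    have h₁ := apply_le_of_monotoneOn_Icc_of_antitoneOn_Ici hmono hanti (Nat.cast_nonneg m)
    have h₂ := apply_le_of_monotoneOn_Icc_of_antitoneOn_Ici hmono hanti (Nat.cast_nonneg (m + 1))
    linarith
  have hsplit : ∑ k ∈ Finset.range (m + 2 + n), f k = ∑ k ∈ Finset.range m, f k +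
      (f m + f (m + 1 : ℕ)) + ∑ i ∈ Finset.range n, f ((m + 1 : ℝ) + ↑(i + 1)) := by
    rw [Finset.sum_range_add, Finset.sum_range_succ, Finset.sum_range_succ]
    push_cast
    ring_nf
  have hint' := intervalIntegral_add_intervalIntegral_le_integral_Ioi (b := m) (c := m + 1)
    (d := m + 1 + n) m.cast_nonneg (by linarith) (by simp) (fun x hx => hf x hx.le) hint
  calc ∑ k ∈ Finset.range n, f k ≤ ∑ k ∈ Finset.range (m + 2 + n), f k :=
        Finset.sum_le_sum_of_subset_of_nonneg (Finset.range_subset_range.mpr (by omega))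
          fun k _ _ => hf k k.cast_nonneg
    _ ≤ 2 * f c + ∫ x in Ioi 0, f x := by linarith

theorem tsum_le_two_mul_add_integral_of_unimodal (hc : 0 ≤ c)
    (hmono : MonotoneOn f (Icc 0 c)) (hanti : AntitoneOn f (Ici c))
    (hf : ∀ x, 0 ≤ x → 0 ≤ f x) (hint : IntegrableOn f (Ioi 0)) :
    ∑' k : ℕ, f k ≤ 2 * f c + ∫ x in Ioi 0, f x :=
  Real.tsum_le_of_sum_range_le (fun k => hf k k.cast_nonneg)
    (sum_range_le_two_mul_add_integral_of_unimodal hc hmono hanti hf hint)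

end Unimodal

section GammaKernel

variable {α L : ℝ}

lemma hasDerivAt_rpow_mul_exp_neg_mul {x : ℝ} (hx : 0 < x) :
    HasDerivAt (fun x => x ^ α * exp (-(L * x)))
      (x ^ (α - 1) * exp (-(L * x)) * (α - L * x)) x := by
  refine ((hasDerivAt_rpow_const (Or.inl hx.ne')).mul
    (((hasDerivAt_id' x).const_mul L).fun_neg.exp)).congr_deriv ?_
  rw [rpow_sub_one hx.ne']
  field_simp
  ring

lemma continuous_rpow_mul_exp_neg_mul (hα : 0 ≤ α) :
    Continuous fun x : ℝ => x ^ α * exp (-(L * x)) :=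
  (continuous_id.rpow_const fun _ => Or.inr hα).mul (by fun_prop)

lemma monotoneOn_rpow_mul_exp_neg_mul (hα : 0 ≤ α) (hL : 0 < L) :
    MonotoneOn (fun x => x ^ α * exp (-(L * x))) (Icc 0 (α / L)) := by
  refine monotoneOn_of_hasDerivWithinAt_nonneg (convex_Icc 0 (α / L))
    (f' := fun x => x ^ (α - 1) * exp (-(L * x)) * (α - L * x))
    (continuous_rpow_mul_exp_neg_mul hα).continuousOn
    (fun x hx => ?_) fun x hx => ?_ <;> rw [interior_Icc] at hx
  · exact (hasDerivAt_rpow_mul_exp_neg_mul hx.1).hasDerivWithinAt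
  · have hLx : L * x < α := (lt_div_iff₀' hL).mp hx.2
    have hx₀ := hx.1
    exact mul_nonneg (by positivity) (by linarith)

lemma antitoneOn_rpow_mul_exp_neg_mul (hα : 0 ≤ α) (hL : 0 < L) :
    AntitoneOn (fun x => x ^ α * exp (-(L * x))) (Ici (α / L)) := by
  refine antitoneOn_of_hasDerivWithinAt_nonpos (convex_Ici (α / L))
    (f' := fun x => x ^ (α - 1) * exp (-(L * x)) * (α - L * x))
    (continuous_rpow_mul_exp_neg_mul hα).continuousOn
    (fun x hx => ?_) fun x hx => ?_ <;> rw [interior_Ici, mem_Ioi] at hx <;>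
    have hx₀ : 0 < x := (div_nonneg hα hL.le).trans_lt hx
  · exact (hasDerivAt_rpow_mul_exp_neg_mul hx₀).hasDerivWithinAt
  · rw [div_lt_iff₀ hL] at hx
    exact mul_nonpos_of_nonneg_of_nonpos (by positivity) (by linarith)

lemma rpow_mul_exp_neg_mul_at_peak (hα : 0 ≤ α) (hL : 0 < L) :
    (α / L) ^ α * exp (-(L * (α / L))) = (α / (exp 1 * L)) ^ α := by
  rw [mul_div_cancel₀ α hL.ne', div_mul_eq_div_div_swap, div_rpow (div_nonneg hα hL.le)
    (exp_pos 1).le, exp_one_rpow, exp_neg, ← div_eq_mul_inv]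

lemma integral_rpow_mul_exp_neg_mul_Ioi_eq_Gamma_div (hα : -1 < α) (hL : 0 < L) :
    ∫ x in Ioi 0, x ^ α * exp (-(L * x)) = Gamma (α + 1) / L ^ (α + 1) := by
  have h := integral_rpow_mul_exp_neg_mul_Ioi (a := α + 1) (by linarith) hL
  rwa [add_sub_cancel_right, one_div, inv_rpow hL.le, inv_mul_eq_div] at h

lemma integrableOn_rpow_mul_exp_neg_mul (hα : -1 < α) (hL : 0 < L) :
    IntegrableOn (fun x => x ^ α * exp (-(L * x))) (Ioi 0) := by
  simpa [rpow_one, neg_mul] using integrableOn_rpow_mul_exp_neg_mul_rpow (p := 1) hα one_pos hL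

end GammaKernel

/-- Polylogarithm bound: `Li_{-α}(r) = Σ_{k≥1} k^α r^k ≤ 2(α/(e log(1/r)))^α + Γ(α+1)/(log(1/r))^{α+1}`. -/
theorem polylog_bound (α r : ℝ) (hα : 0 < α) (hr : r ∈ Set.Ioo (0 : ℝ) 1) :
    (∑' k : ℕ, (k : ℝ) ^ α * r ^ k) ≤
      2 * (α / (Real.exp 1 * Real.log (1 / r))) ^ α +
        Real.Gamma (α + 1) / Real.log (1 / r) ^ (α + 1) := by
  obtain ⟨hr₀, hr₁⟩ := hr
  have hL : 0 < log (1 / r) := log_pos (one_lt_one_div hr₀ hr₁)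
  have hpow (k : ℕ) : r ^ k = exp (-(log (1 / r) * k)) := by
    rw [one_div, log_inv, neg_mul, neg_neg, mul_comm, exp_nat_mul, exp_log hr₀]
  simp_rw [hpow]
  rw [← rpow_mul_exp_neg_mul_at_peak hα.le hL,
    ← integral_rpow_mul_exp_neg_mul_Ioi_eq_Gamma_div (by linarith) hL]
  exact tsum_le_two_mul_add_integral_of_unimodal (by positivity)
    (monotoneOn_rpow_mul_exp_neg_mul hα.le hL) (antitoneOn_rpow_mul_exp_neg_mul hα.le hL)
    (fun x hx => by positivity) (integrableOn_rpow_mul_exp_neg_mul (by linarith) hL)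

end
end

section
/- Let γ∈(0,1], ψ(x) = exp(−|x|^γ)/χ with χ = ∫_ℝ exp(−|x|^γ)dx, ψ^σ(x) = ψ(x/σ)/σ for σ>0, and q_σ := q ∗ ψ^σ for a probability density q on ℝ. Then for all a,b,z∈ℝ, q_σ(z−a) ≤ exp( |a−b|^γ / σ^γ ) · q_σ(z−b). In particular, ‖log( T_a q_σ / T_b q_σ )‖_{L^∞(ℝ)} ≤ (|a−b|/σ)^γ for all a,b∈ℝ. -/
/-!
Subadditivity of `|·|^γ` for `γ ≤ 1` gives the kernel bound `ψ^σ(u) ≤ exp((|u - v|/σ)^γ) ψ^σ(v)`;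
multiplying by `q(y) ≥ 0` and integrating gives the shift inequality for `q_σ`, and using it in both
directions bounds the log-ratio.
-/

open MeasureTheory Filter Real Set
open scoped ENNReal NNReal Classical

noncomputable section

/-- Normalization constant `χ = ∫ exp(-|x|^γ) dx`. -/
def chiC (γ : ℝ) : ℝ := ∫ x : ℝ, Real.exp (-|x| ^ γ)

/-- The density `ψ(x) = exp(-|x|^γ) / χ`. -/
def psi (γ : ℝ) (x : ℝ) : ℝ := Real.exp (-|x| ^ γ) / chiC γ

/-- The dilated density `ψ^σ(x) = ψ(x/σ)/σ`. -/
def psiS (γ σ : ℝ) (x : ℝ) : ℝ := psi γ (x / σ) / σ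

/-- The smoothed density `q_σ = q ∗ ψ^σ`. -/
def smoothed (γ σ : ℝ) (q : ℝ → ℝ) (x : ℝ) : ℝ := ∫ y, q y * psiS γ σ (x - y)

theorem abs_add_rpow_le {γ : ℝ} (hγ0 : 0 ≤ γ) (hγ1 : γ ≤ 1) (u v : ℝ) :
    |u + v| ^ γ ≤ |u| ^ γ + |v| ^ γ :=
  (rpow_le_rpow (abs_nonneg _) (abs_add_le u v) hγ0).trans
    (rpow_add_le_add_rpow (abs_nonneg u) (abs_nonneg v) hγ0 hγ1)

theorem exp_neg_abs_rpow_le_exp_mul {γ : ℝ} (hγ0 : 0 ≤ γ) (hγ1 : γ ≤ 1) (u v : ℝ) :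
    exp (-|u| ^ γ) ≤ exp (|u - v| ^ γ) * exp (-|v| ^ γ) := by
  rw [← exp_add, exp_le_exp]
  have := abs_add_rpow_le hγ0 hγ1 u (v - u)
  rw [add_sub_cancel, abs_sub_comm] at this
  linarith

theorem chiC_nonneg (γ : ℝ) : 0 ≤ chiC γ :=
  integral_nonneg fun _ => (exp_pos _).le

theorem psi_nonneg (γ x : ℝ) : 0 ≤ psi γ x :=
  div_nonneg (exp_pos _).le (chiC_nonneg γ)

theorem psiS_nonneg (γ : ℝ) {σ : ℝ} (hσ : 0 ≤ σ) (x : ℝ) : 0 ≤ psiS γ σ x :=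
  div_nonneg (psi_nonneg _ _) hσ

theorem smoothed_nonneg (γ : ℝ) {σ : ℝ} (hσ : 0 ≤ σ) {q : ℝ → ℝ} (hq0 : ∀ x, 0 ≤ q x) (x : ℝ) :
    0 ≤ smoothed γ σ q x :=
  integral_nonneg fun y => mul_nonneg (hq0 y) (psiS_nonneg γ hσ _)

theorem measurable_psiS (γ σ : ℝ) : Measurable (psiS γ σ) := by
  unfold psiS psi
  fun_prop

theorem psi_le_exp_mul {γ : ℝ} (hγ0 : 0 ≤ γ) (hγ1 : γ ≤ 1) (u v : ℝ) :
    psi γ u ≤ exp (|u - v| ^ γ) * psi γ v := by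
  rw [psi, psi, ← mul_div_assoc]
  exact div_le_div_of_nonneg_right (exp_neg_abs_rpow_le_exp_mul hγ0 hγ1 u v) (chiC_nonneg γ)

theorem psiS_le_exp_mul {γ : ℝ} (hγ0 : 0 ≤ γ) (hγ1 : γ ≤ 1) {σ : ℝ} (hσ : 0 ≤ σ) (u v : ℝ) :
    psiS γ σ u ≤ exp ((|u - v| / σ) ^ γ) * psiS γ σ v := by
  have h := psi_le_exp_mul hγ0 hγ1 (u / σ) (v / σ)
  rw [← sub_div, abs_div, abs_of_nonneg hσ] at h
  rw [psiS, psiS, ← mul_div_assoc]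
  exact div_le_div_of_nonneg_right h hσ

/-- The reverse bound `hgf` makes `f` and `g` integrable together, so none needs to be assumed. -/
theorem integral_le_mul_integral_of_ae_le_mul {α : Type*} [MeasurableSpace α] {μ : Measure α}
    {f g : α → ℝ} {C C' : ℝ} (hg : AEStronglyMeasurable g μ) (hf0 : 0 ≤ᵐ[μ] f)
    (hg0 : 0 ≤ᵐ[μ] g) (hfg : ∀ᵐ x ∂μ, f x ≤ C * g x) (hgf : ∀ᵐ x ∂μ, g x ≤ C' * f x) :
    ∫ x, f x ∂μ ≤ C * ∫ x, g x ∂μ := by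
  by_cases hgi : Integrable g μ
  · rw [← integral_const_mul]
    exact integral_mono_of_nonneg hf0 (hgi.const_mul C) hfg
  · have hfi : ¬ Integrable f μ := fun hfi =>
      hgi <| (hfi.const_mul C').mono' hg <| by
        filter_upwards [hg0, hgf] with x hx0 hx
        rwa [Real.norm_of_nonneg hx0]
    rw [integral_undef hfi, integral_undef hgi, mul_zero]

theorem smoothed_sub_le_exp_mul {γ : ℝ} (hγ0 : 0 ≤ γ) (hγ1 : γ ≤ 1) {σ : ℝ} (hσ : 0 ≤ σ)
    {q : ℝ → ℝ} (hqm : Measurable q) (hq0 : ∀ x, 0 ≤ q x) (a b z : ℝ) :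
    smoothed γ σ q (z - a) ≤ exp ((|a - b| / σ) ^ γ) * smoothed γ σ q (z - b) := by
  have kernel_le : ∀ c d y, psiS γ σ (z - c - y) ≤
      exp ((|c - d| / σ) ^ γ) * psiS γ σ (z - d - y) := fun c d y => by
    have h := psiS_le_exp_mul hγ0 hγ1 hσ (z - c - y) (z - d - y)
    rwa [show z - c - y - (z - d - y) = d - c by ring, abs_sub_comm] at h
  refine integral_le_mul_integral_of_ae_le_mul (C' := exp ((|b - a| / σ) ^ γ))
    (hqm.mul ((measurable_psiS γ σ).comp (measurable_const.sub measurable_id))).aestronglyMeasurable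
    (ae_of_all _ fun y => mul_nonneg (hq0 y) (psiS_nonneg γ hσ _))
    (ae_of_all _ fun y => mul_nonneg (hq0 y) (psiS_nonneg γ hσ _))
    (ae_of_all _ fun y => ?_) (ae_of_all _ fun y => ?_)
  · rw [mul_left_comm]
    exact mul_le_mul_of_nonneg_left (kernel_le a b y) (hq0 y)
  · rw [mul_left_comm]
    exact mul_le_mul_of_nonneg_left (kernel_le b a y) (hq0 y)

theorem abs_log_div_le_of_le_exp_mul {s t c : ℝ} (hc : 0 ≤ c) (ht : 0 ≤ t)
    (hst : s ≤ exp c * t) (hts : t ≤ exp c * s) : |log (s / t)| ≤ c := by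
  rcases ht.eq_or_lt with rfl | ht
  · simpa using hc
  have hs : 0 < s := pos_of_mul_pos_right (ht.trans_le hts) (exp_pos c).le
  have log_sub_le : ∀ {u v : ℝ}, 0 < u → 0 < v → u ≤ exp c * v → log u - log v ≤ c :=
    fun hu hv h => by
      have := log_le_log hu h
      rw [log_mul (exp_pos c).ne' hv.ne', log_exp] at this
      linarith
  rw [log_div hs.ne' ht.ne', abs_le]
  constructor
  · linarith [log_sub_le ht hs hts]
  · exact log_sub_le hs ht hst

theorem smoothed_shift_ratio_bound_general (γ : ℝ) (hγ : γ ∈ Set.Ioc (0 : ℝ) 1)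
    (σ : ℝ) (hσ : 0 < σ)
    (q : ℝ → ℝ) (hqm : Measurable q) (hq0 : ∀ x, 0 ≤ q x) :
    (∀ a b z : ℝ,
      smoothed γ σ q (z - a) ≤ Real.exp (|a - b| ^ γ / σ ^ γ) * smoothed γ σ q (z - b)) ∧
    (∀ a b x : ℝ,
      |Real.log (smoothed γ σ q (x - a) / smoothed γ σ q (x - b))| ≤ (|a - b| / σ) ^ γ) := by
  have ratio := smoothed_sub_le_exp_mul hγ.1.le hγ.2 hσ.le hqm hq0
  refine ⟨fun a b z => ?_, fun a b x => ?_⟩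
  · rw [← div_rpow (abs_nonneg _) hσ.le]
    exact ratio a b z
  · refine abs_log_div_le_of_le_exp_mul (by positivity) (smoothed_nonneg γ hσ.le hq0 _)
      (ratio a b x) ?_
    simpa only [abs_sub_comm] using ratio b a x

/-- Pointwise ratio bound for smoothed densities: `q_σ(z-a) ≤ exp(|a-b|^γ/σ^γ) q_σ(z-b)`,
hence `‖log(T_a q_σ / T_b q_σ)‖_∞ ≤ (|a-b|/σ)^γ`. -/
theorem smoothed_shift_ratio_bound (γ : ℝ) (hγ : γ ∈ Set.Ioc (0 : ℝ) 1)
    (σ : ℝ) (hσ : 0 < σ)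
    (q : ℝ → ℝ) (hqm : Measurable q) (hq0 : ∀ x, 0 ≤ q x) (hq1 : ∫ x, q x = 1) :
    (∀ a b z : ℝ,
      smoothed γ σ q (z - a) ≤ Real.exp (|a - b| ^ γ / σ ^ γ) * smoothed γ σ q (z - b)) ∧
    (∀ a b x : ℝ,
      |Real.log (smoothed γ σ q (x - a) / smoothed γ σ q (x - b))| ≤ (|a - b| / σ) ^ γ) :=
  smoothed_shift_ratio_bound_general γ hγ σ hσ q hqm hq0

end
end
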